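/- Secrecy is not closed under conjunction: there exists a simplicial secrecy model, a facet X, and formulas φ, ψ such that S_aφ and S_aψ both hold at X but S_a(φ ∧ ψ) fails at X. -/

import Mathlib

/-- Formulas of the epistemic-secrecy language: atoms, ¬, ∧, K_a, S_a. -/
inductive Form (A P : Type) : Type where
  | atom : P → Form A P
  | neg : Form A P → Form A P
  | and : Form A P → Form A P → Form A P
  | K : A → Form A P → Form A P
  | S : A → Form A P → Form A P

/-- A simplicial secrecy model over agents `A` and propositional variables `P`:
an `A`-chromatic simplicial epistemic model (vertices `V`, downward-closed family of
non-empty finite faces `F`, colouring `χ` injective on faces, every facet containing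
all colours, every vertex lying in a facet, valuation `ν` on facets) enriched with
secrecy neighborhood functions `N` attached to vertices (local states).
`va a X` is the unique vertex of colour `a` in a facet `X`. -/
structure SSModel (A P : Type) where
  V : Type
  F : Set (Finset V)
  F_nonempty : F.Nonempty
  faces_nonempty : ∀ X ∈ F, X.Nonempty
  down_closed : ∀ X ∈ F, ∀ Y : Finset V, Y.Nonempty → Y ⊆ X → Y ∈ F
  χ : V → A
  chromatic : ∀ X ∈ F, Set.InjOn χ (X : Set V)
  va : A → Finset V → V
  va_spec : ∀ X ∈ F, (∀ Y ∈ F, X ⊆ Y → X = Y) → ∀ a : A, va a X ∈ X ∧ χ (va a X) = a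
  facet_all_colours : ∀ X ∈ F, (∀ Y ∈ F, X ⊆ Y → X = Y) → ∀ a : A, ∃ v ∈ X, χ v = a
  vertex_cover : ∀ v : V, ∃ X ∈ F, (∀ Y ∈ F, X ⊆ Y → X = Y) ∧ v ∈ X
  ν : Finset V → P → Prop
  N : V → Set (Set (Finset V))

namespace SSModel

variable {A P : Type}

/-- A facet is a maximal face. -/
def IsFacet (M : SSModel A P) (X : Finset M.V) : Prop :=
  X ∈ M.F ∧ ∀ Y ∈ M.F, X ⊆ Y → X = Y

/-- The star of a vertex: the set of facets containing it. -/
def St (M : SSModel A P) (v : M.V) : Set (Finset M.V) :=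
  {X | M.IsFacet X ∧ v ∈ X}

/-- Truth at a facet. `X ~_a Y` iff `va a X = va a Y`.  `S a φ` holds iff `K a φ` holds
and the truth set of `φ` is a designated secrecy neighborhood at the owner's `a`-vertex. -/
def Sat (M : SSModel A P) : Form A P → Finset M.V → Prop
  | Form.atom p, X => M.ν X p
  | Form.neg φ, X => ¬ M.Sat φ X
  | Form.and φ ψ, X => M.Sat φ X ∧ M.Sat ψ X
  | Form.K a φ, X => ∀ Y, M.IsFacet Y → M.va a X = M.va a Y → M.Sat φ Y
  | Form.S a φ, X =>
      (∀ Y, M.IsFacet Y → M.va a X = M.va a Y → M.Sat φ Y) ∧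
      {Y : Finset M.V | M.IsFacet Y ∧ M.Sat φ Y} ∈ M.N (M.va a X)

/-- Frame condition (SN), external uncertainty: every designated secrecy event at an
`a`-coloured local state `v` leaves every other agent `b` with an indistinguishable
facet outside the event, from every facet in the star of `v`. -/
def SN (M : SSModel A P) : Prop :=
  ∀ v : M.V, ∀ U ∈ M.N v, ∀ X : Finset M.V, M.IsFacet X → v ∈ X →
    ∀ b : A, b ≠ M.χ v → ∃ Y : Finset M.V, M.IsFacet Y ∧ M.va b X = M.va b Y ∧ Y ∉ U

end SSModel

/-!
Take three facets `{uᵢ, w}` (`i = 0, 1, 2`) sharing the single `b`-vertex `w`. Agent `b` then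
cannot tell any facets apart, so (SN) holds as soon as every designated set misses some facet.
Let `p` hold on `{u₀, w}, {u₁, w}` and `r` on `{u₀, w}, {u₂, w}`, and designate exactly these two
truth sets at `u₀`. Agent `a` knows the facet `{u₀, w}`, so `S_a p` and `S_a r` hold there, but
`⟦p ∧ r⟧ = {{u₀, w}}` is not designated. Vertices are encoded as `uᵢ = i`, `w = 3`, agents as
`a = true`, `b = false`, and atoms as `p = true`, `r = false`.
-/

namespace SSModel

variable {A P : Type} (M : SSModel A P)

def truthSet (φ : Form A P) : Set (Finset M.V) :=
  {Y | M.IsFacet Y ∧ M.Sat φ Y}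

variable {M}

theorem sat_S_iff {a : A} {φ : Form A P} {X : Finset M.V} :
    M.Sat (.S a φ) X ↔ M.Sat (.K a φ) X ∧ M.truthSet φ ∈ M.N (M.va a X) :=
  Iff.rfl

theorem truthSet_and (φ ψ : Form A P) :
    M.truthSet (.and φ ψ) = M.truthSet φ ∩ M.truthSet ψ := by
  ext Y
  simp only [truthSet, Sat, Set.mem_inter_iff, Set.mem_ofPred_eq]
  tauto

theorem not_sat_S_and_of_inter_notMem {a : A} {φ ψ : Form A P} {X : Finset M.V}
    (h : M.truthSet φ ∩ M.truthSet ψ ∉ M.N (M.va a X)) :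
    ¬ M.Sat (.S a (.and φ ψ)) X := by
  rw [sat_S_iff, truthSet_and]
  exact fun hS => h hS.2

end SSModel

namespace SecrecyCounterexample

open SSModel

def setP : Set (Finset (Fin 4)) := {{0, 3}, {1, 3}}

def setR : Set (Finset (Fin 4)) := {{0, 3}, {2, 3}}

abbrev model : SSModel Bool Bool where
  V := Fin 4
  F := {X | X.Nonempty ∧ ∃ j : Fin 4, j.val < 3 ∧ X ⊆ {j, 3}}
  F_nonempty := ⟨{0}, by decide⟩
  faces_nonempty _ hX := hX.1
  down_closed _ hX _ hYne hYX := ⟨hYne, hX.2.choose, hX.2.choose_spec.1,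
    hYX.trans hX.2.choose_spec.2⟩
  χ v := decide (v.val < 3)
  chromatic := by decide
  va a X := if a then (if 0 ∈ X then 0 else if 1 ∈ X then 1 else 2) else 3
  va_spec := by decide
  facet_all_colours := by decide
  vertex_cover := by decide
  ν X q := X ∈ if q then setP else setR
  N v := if v = 0 then {setP, setR} else ∅

theorem isFacet_iff (Y : Finset (Fin 4)) :
    model.IsFacet Y ↔ Y = {0, 3} ∨ Y = {1, 3} ∨ Y = {2, 3} := by
  simp only [IsFacet, model, Set.mem_ofPred_eq]
  revert Y
  decide

theorem valuation_subset_facets (q : Bool) :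
    (if q then setP else setR) ⊆ {Y | model.IsFacet Y} := by
  intro Y hY
  rw [Set.mem_ofPred_eq, isFacet_iff]
  cases q <;>
    simp only [setP, setR, Bool.false_eq_true, ↓reduceIte, Set.mem_insert_iff,
      Set.mem_singleton_iff] at hY <;> tauto

theorem truthSet_atom (q : Bool) :
    model.truthSet (.atom q) = if q then setP else setR :=
  Set.ext fun _ => ⟨And.right, fun hY => ⟨valuation_subset_facets q hY, hY⟩⟩

theorem sat_K_iff {φ : Form Bool Bool} :
    model.Sat (.K true φ) {0, 3} ↔ model.Sat φ {0, 3} := by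
  refine ⟨fun h => h _ ((isFacet_iff _).2 (.inl rfl)) rfl, fun h Y hY hva => ?_⟩
  rw [isFacet_iff] at hY
  rcases hY with rfl | rfl | rfl
  · exact h
  all_goals exact absurd hva (by decide)

theorem sat_S_atom (q : Bool) : model.Sat (.S true (.atom q)) {0, 3} := by
  refine sat_S_iff.2 ⟨sat_K_iff.2 ?_, ?_⟩
  · cases q <;> simp [Sat, setP, setR]
  · rw [truthSet_atom]
    cases q <;> simp [model]

theorem facet_13_notMem_setR : ({1, 3} : Finset (Fin 4)) ∉ setR := by
  simp only [setR, Set.mem_insert_iff, Set.mem_singleton_iff, not_or]; decide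

theorem facet_23_notMem_setP : ({2, 3} : Finset (Fin 4)) ∉ setP := by
  simp only [setP, Set.mem_insert_iff, Set.mem_singleton_iff, not_or]; decide

theorem model_sn : model.SN := by
  intro v U hU _ _ _ b hb
  obtain rfl : v = 0 := by
    by_contra hv
    simp [model, hv] at hU
  obtain rfl : b = false := by simpa using hb
  simp only [model, if_pos, Set.mem_insert_iff, Set.mem_singleton_iff] at hU
  rcases hU with rfl | rfl
  · exact ⟨{2, 3}, (isFacet_iff _).2 (by simp), rfl, facet_23_notMem_setP⟩
  · exact ⟨{1, 3}, (isFacet_iff _).2 (by simp), rfl, facet_13_notMem_setR⟩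

theorem inter_notMem_N : setP ∩ setR ∉ model.N 0 := by
  simp only [model, if_pos, Set.mem_insert_iff, Set.mem_singleton_iff, not_or]
  exact ⟨fun h => facet_13_notMem_setR (Set.inter_eq_left.1 h (by simp [setP])),
    fun h => facet_23_notMem_setP (Set.inter_eq_right.1 h (by simp [setR]))⟩

end SecrecyCounterexample

/-- Secrecy is not closed under conjunction: there are a simplicial secrecy model, a
facet `X`, and formulas `φ, ψ` with `S_a φ` and `S_a ψ` true at `X` but `S_a (φ ∧ ψ)`
false at `X`. -/
theorem secrecy_not_conjunctive :
    ∃ (A P : Type) (M : SSModel A P) (a : A) (X : Finset M.V) (φ ψ : Form A P),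
      M.SN ∧ M.IsFacet X ∧
      M.Sat (Form.S a φ) X ∧ M.Sat (Form.S a ψ) X ∧
      ¬ M.Sat (Form.S a (Form.and φ ψ)) X := by
  open SecrecyCounterexample in
  refine ⟨Bool, Bool, model, true, {0, 3}, .atom true, .atom false, model_sn,
    (isFacet_iff _).2 (.inl rfl), sat_S_atom true, sat_S_atom false,
    SSModel.not_sat_S_and_of_inter_notMem ?_⟩
  rw [truthSet_atom, truthSet_atom]
  exact inter_notMem_N
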